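/- For 1/2 ≤ τ < 1, a bounded random variable L, and ℓ = e_τ(L), define φ̄ = (τ·1_{L > ℓ} + (1−τ)·1_{L ≤ ℓ}) / (τ·P[L > ℓ] + (1−τ)·P[L ≤ ℓ]). Then φ̄ ≥ 0, E[φ̄] = 1, e_τ(L) = E[φ̄·L], and for every bounded random variable L*, e_τ(L + L*) ≥ e_τ(L) + E[φ̄·L*] (i.e., φ̄ is a subgradient of e_τ at L). -/

import Mathlib

/-!
Write `w(t) = τ` for `t > 0` and `w(t) = 1 - τ` for `t ≤ 0`, so that `φ̄ = w(L - ℓ) / E[w(L - ℓ)]`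
and the expectile equation for `ℓ` reads `E[w(L - ℓ)(L - ℓ)] = 0`; this gives `E[φ̄ L] = ℓ`.
The map `x ↦ E[w(Z - x)(Z - x)]` decreases at rate at least `min(τ, 1 - τ) > 0`, so
the expectile of `Z` is the unique zero and lies above every `x` at which the map is nonnegative.
For `τ ≥ 1/2` the loss `t ↦ w(t) t` is convex with subgradient `w(t)` at `t`; applied at
`t = L - ℓ` and `s = L + L* - (ℓ + E[φ̄ L*])` and integrated, it shows that the map for `L + L*`
is nonnegative at `ℓ + E[φ̄ L*]`.
-/

open MeasureTheory

noncomputable def expectileWeight (τ t : ℝ) : ℝ := if 0 < t then τ else 1 - τ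

lemma measurable_expectileWeight (τ : ℝ) : Measurable (expectileWeight τ) :=
  Measurable.ite (measurableSet_lt measurable_const measurable_id) measurable_const
    measurable_const

lemma abs_expectileWeight_le (τ t : ℝ) : |expectileWeight τ t| ≤ |τ| + |1 - τ| := by
  unfold expectileWeight
  split_ifs <;> linarith [abs_nonneg τ, abs_nonneg (1 - τ)]

lemma min_le_expectileWeight (τ t : ℝ) : min τ (1 - τ) ≤ expectileWeight τ t := by
  unfold expectileWeight
  split_ifs
  exacts [min_le_left _ _, min_le_right _ _]

lemma expectileWeight_mul_self (τ t : ℝ) :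
    expectileWeight τ t * t = τ * max t 0 - (1 - τ) * max (-t) 0 := by
  unfold expectileWeight
  split_ifs with ht
  · rw [max_eq_left ht.le, max_eq_right (by linarith)]; ring
  · rw [max_eq_right (not_lt.1 ht), max_eq_left (by linarith)]; ring

lemma expectileWeight_mul_le_mul_self {τ : ℝ} (hτ : 1 / 2 ≤ τ) (s t : ℝ) :
    expectileWeight τ t * s ≤ expectileWeight τ s * s := by
  unfold expectileWeight
  split_ifs <;> nlinarith

lemma expectileWeight_mul_self_add_le {τ : ℝ} (s t : ℝ) (hst : s ≤ t) :
    expectileWeight τ s * s + min τ (1 - τ) * (t - s) ≤ expectileWeight τ t * t := by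
  have := min_le_left τ (1 - τ)
  have := min_le_right τ (1 - τ)
  unfold expectileWeight
  split_ifs <;> nlinarith

lemma expectileWeight_sub_eq_ite (τ a b : ℝ) :
    expectileWeight τ (a - b)
      = τ * (if b < a then (1 : ℝ) else 0) + (1 - τ) * (if a ≤ b then (1 : ℝ) else 0) := by
  rcases lt_or_ge b a with h | h
  · simp [expectileWeight, sub_pos.2 h, h, not_le.2 h]
  · simp [expectileWeight, h, not_lt.2 h]

def IsExpectile {Ω : Type*} [MeasurableSpace Ω] (P : Measure Ω) (τ : ℝ) (Z : Ω → ℝ) (x : ℝ) :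
    Prop :=
  τ * ∫ ω, max (Z ω - x) 0 ∂P = (1 - τ) * ∫ ω, max (x - Z ω) 0 ∂P

noncomputable def expectileDensity {Ω : Type*} [MeasurableSpace Ω] (P : Measure Ω) (τ : ℝ)
    (Z : Ω → ℝ) (x : ℝ) (ω : Ω) : ℝ :=
  expectileWeight τ (Z ω - x) / ∫ ω', expectileWeight τ (Z ω' - x) ∂P

section

variable {Ω : Type*} [MeasurableSpace Ω] {P : Measure Ω} {τ : ℝ} {Z Y : Ω → ℝ} {x : ℝ}

lemma integrable_of_abs_le [IsFiniteMeasure P] {f : Ω → ℝ} (hf : Measurable f)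
    (hb : ∃ C, ∀ ω, |f ω| ≤ C) : Integrable f P :=
  let ⟨C, hC⟩ := hb
  .of_bound hf.aestronglyMeasurable C (ae_of_all _ hC)

lemma integrable_expectileWeight_comp [IsFiniteMeasure P] (hZ : AEMeasurable Z P) :
    Integrable (fun ω => expectileWeight τ (Z ω)) P :=
  .of_bound ((measurable_expectileWeight τ).comp_aemeasurable hZ).aestronglyMeasurable _
    (ae_of_all _ fun _ => abs_expectileWeight_le τ _)

lemma integrable_expectileWeight_comp_mul (hZ : AEMeasurable Z P) (hY : Integrable Y P) :
    Integrable (fun ω => expectileWeight τ (Z ω) * Y ω) P :=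
  hY.bdd_mul ((measurable_expectileWeight τ).comp_aemeasurable hZ).aestronglyMeasurable
    (ae_of_all _ fun _ => abs_expectileWeight_le τ _)

lemma integrable_expectileWeight_mul_sub [IsFiniteMeasure P] (hZ : Integrable Z P) (x : ℝ) :
    Integrable (fun ω => expectileWeight τ (Z ω - x) * (Z ω - x)) P :=
  have hZx : Integrable (fun ω => Z ω - x) P := hZ.sub (integrable_const x)
  integrable_expectileWeight_comp_mul hZx.aemeasurable hZx

lemma isExpectile_iff_integral_eq_zero [IsFiniteMeasure P] (hZ : Integrable Z P) :
    IsExpectile P τ Z x ↔ ∫ ω, expectileWeight τ (Z ω - x) * (Z ω - x) ∂P = 0 := by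
  have hZx : Integrable (fun ω => Z ω - x) P := hZ.sub (integrable_const x)
  have hxZ : Integrable (fun ω => x - Z ω) P := (integrable_const x).sub hZ
  simp_rw [expectileWeight_mul_self, neg_sub]
  rw [integral_sub (hZx.pos_part.const_mul τ) (hxZ.pos_part.const_mul (1 - τ)),
    integral_const_mul, integral_const_mul, sub_eq_zero, IsExpectile]

lemma IsExpectile.le_of_integral_nonneg [IsProbabilityMeasure P] (hτ0 : 0 < τ) (hτ1 : τ < 1)
    (hZ : Integrable Z P) (hx : IsExpectile P τ Z x) {y : ℝ}
    (hy : 0 ≤ ∫ ω, expectileWeight τ (Z ω - y) * (Z ω - y) ∂P) : y ≤ x := by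
  by_contra! hxy
  have hgap : 0 < min τ (1 - τ) * (y - x) := mul_pos (lt_min hτ0 (by linarith)) (by linarith)
  have hmono : ∫ ω, expectileWeight τ (Z ω - y) * (Z ω - y) ∂P + min τ (1 - τ) * (y - x)
      ≤ ∫ ω, expectileWeight τ (Z ω - x) * (Z ω - x) ∂P := by
    have hZy := integrable_expectileWeight_mul_sub (τ := τ) hZ y
    calc _ = ∫ ω, (expectileWeight τ (Z ω - y) * (Z ω - y) + min τ (1 - τ) * (y - x)) ∂P := by
          rw [integral_add hZy (integrable_const _)]; simp
      _ ≤ _ := integral_mono (hZy.add (integrable_const _))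
          (integrable_expectileWeight_mul_sub hZ x) fun ω => by
            simpa only [sub_sub_sub_cancel_left] using
              expectileWeight_mul_self_add_le (τ := τ) (Z ω - y) (Z ω - x) (by linarith)
  linarith [(isExpectile_iff_integral_eq_zero hZ).1 hx]

lemma integral_expectileWeight_pos [IsProbabilityMeasure P] (hτ0 : 0 < τ) (hτ1 : τ < 1)
    (hZ : AEMeasurable Z P) : 0 < ∫ ω, expectileWeight τ (Z ω) ∂P :=
  calc 0 < min τ (1 - τ) := lt_min hτ0 (by linarith)
    _ = ∫ _, min τ (1 - τ) ∂P := by simp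
    _ ≤ _ := integral_mono (integrable_const _) (integrable_expectileWeight_comp hZ)
        fun _ => min_le_expectileWeight τ _

lemma expectileDensity_nonneg [IsProbabilityMeasure P] (hτ0 : 0 < τ) (hτ1 : τ < 1)
    (hZ : AEMeasurable Z P) (ω : Ω) : 0 ≤ expectileDensity P τ Z x ω :=
  div_nonneg ((lt_min hτ0 (by linarith)).le.trans (min_le_expectileWeight τ _))
    (integral_expectileWeight_pos hτ0 hτ1 (hZ.sub_const x)).le

lemma integral_expectileDensity_mul (Y : Ω → ℝ) :
    ∫ ω, expectileDensity P τ Z x ω * Y ω ∂P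
      = (∫ ω, expectileWeight τ (Z ω - x) * Y ω ∂P) / ∫ ω, expectileWeight τ (Z ω - x) ∂P := by
  simp only [expectileDensity, div_mul_eq_mul_div, integral_div]

lemma integral_expectileDensity [IsProbabilityMeasure P] (hτ0 : 0 < τ) (hτ1 : τ < 1)
    (hZ : AEMeasurable Z P) : ∫ ω, expectileDensity P τ Z x ω ∂P = 1 := by
  simpa [div_self (integral_expectileWeight_pos hτ0 hτ1 (hZ.sub_const x)).ne']
    using integral_expectileDensity_mul (P := P) (τ := τ) (Z := Z) (x := x) 1

lemma IsExpectile.integral_expectileWeight_mul [IsFiniteMeasure P] (hZ : Integrable Z P)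
    (hx : IsExpectile P τ Z x) :
    ∫ ω, expectileWeight τ (Z ω - x) * Z ω ∂P = x * ∫ ω, expectileWeight τ (Z ω - x) ∂P := by
  have hZx : Integrable (fun ω => Z ω - x) P := hZ.sub (integrable_const x)
  have h := (isExpectile_iff_integral_eq_zero hZ).1 hx
  simp_rw [mul_sub] at h
  rw [integral_sub (integrable_expectileWeight_comp_mul hZx.aemeasurable hZ)
    ((integrable_expectileWeight_comp hZx.aemeasurable).mul_const x), integral_mul_const,
    sub_eq_zero] at h
  rw [h, mul_comm]

lemma IsExpectile.integral_expectileDensity_mul_self [IsProbabilityMeasure P] (hτ0 : 0 < τ)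
    (hτ1 : τ < 1) (hZ : Integrable Z P) (hx : IsExpectile P τ Z x) :
    ∫ ω, expectileDensity P τ Z x ω * Z ω ∂P = x := by
  have hI := integral_expectileWeight_pos hτ0 hτ1 (hZ.aemeasurable.sub_const x)
  rw [integral_expectileDensity_mul, hx.integral_expectileWeight_mul hZ,
    mul_div_cancel_right₀ _ hI.ne']

lemma IsExpectile.add_integral_expectileDensity_mul_le [IsProbabilityMeasure P] (hτ0 : 1 / 2 ≤ τ)
    (hτ1 : τ < 1) (hZ : Integrable Z P) (hY : Integrable Y P) (hx : IsExpectile P τ Z x) {x' : ℝ}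
    (hx' : IsExpectile P τ (fun ω => Z ω + Y ω) x') :
    x + ∫ ω, expectileDensity P τ Z x ω * Y ω ∂P ≤ x' := by
  have hτpos : 0 < τ := by linarith
  have hZx : Integrable (fun ω => Z ω - x) P := hZ.sub (integrable_const x)
  set I := ∫ ω, expectileWeight τ (Z ω - x) ∂P
  set c := ∫ ω, expectileDensity P τ Z x ω * Y ω ∂P
  have hI : 0 < I := integral_expectileWeight_pos hτpos hτ1 hZx.aemeasurable
  have hc : ∫ ω, expectileWeight τ (Z ω - x) * Y ω ∂P = c * I := by
    rw [← div_mul_cancel₀ (∫ ω, expectileWeight τ (Z ω - x) * Y ω ∂P) hI.ne',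
      ← integral_expectileDensity_mul]
  have hwZ := integrable_expectileWeight_comp_mul (τ := τ) hZx.aemeasurable hZ
  have hwY := integrable_expectileWeight_comp_mul (τ := τ) hZx.aemeasurable hY
  have hwZY : Integrable (fun ω => expectileWeight τ (Z ω - x) * Z ω
      + expectileWeight τ (Z ω - x) * Y ω) P := hwZ.add hwY
  have hw := (integrable_expectileWeight_comp (τ := τ) hZx.aemeasurable).mul_const (x + c)
  refine hx'.le_of_integral_nonneg hτpos hτ1 (hZ.add hY) ?_
  calc 0 = ∫ ω, expectileWeight τ (Z ω - x) * Z ω ∂P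
          + ∫ ω, expectileWeight τ (Z ω - x) * Y ω ∂P - I * (x + c) := by
        rw [hx.integral_expectileWeight_mul hZ, hc]; ring
    _ = ∫ ω, (expectileWeight τ (Z ω - x) * Z ω + expectileWeight τ (Z ω - x) * Y ω
          - expectileWeight τ (Z ω - x) * (x + c)) ∂P := by
        rw [integral_sub hwZY hw, integral_add hwZ hwY, integral_mul_const]
    _ = ∫ ω, expectileWeight τ (Z ω - x) * (Z ω + Y ω - (x + c)) ∂P := by
        congr with ω; ring
    _ ≤ ∫ ω, expectileWeight τ (Z ω + Y ω - (x + c)) * (Z ω + Y ω - (x + c)) ∂P :=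
        integral_mono (integrable_expectileWeight_comp_mul hZx.aemeasurable
            ((hZ.add hY).sub (integrable_const _)))
          (integrable_expectileWeight_mul_sub (hZ.add hY) _)
          fun ω => expectileWeight_mul_le_mul_self hτ0 _ _

lemma integral_expectileWeight_sub [IsFiniteMeasure P] {L : Ω → ℝ} (hL : Measurable L)
    (ℓ : ℝ) : ∫ ω, expectileWeight τ (L ω - ℓ) ∂P
      = τ * (P {ω | ℓ < L ω}).toReal + (1 - τ) * (P {ω | L ω ≤ ℓ}).toReal := by
  have hS : MeasurableSet {ω | ℓ < L ω} := measurableSet_lt measurable_const hL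
  have hT : MeasurableSet {ω | L ω ≤ ℓ} := measurableSet_le hL measurable_const
  have hsplit : (fun ω => expectileWeight τ (L ω - ℓ)) = fun ω =>
      τ * {ω | ℓ < L ω}.indicator 1 ω + (1 - τ) * {ω | L ω ≤ ℓ}.indicator 1 ω := by
    funext ω
    simp only [expectileWeight_sub_eq_ite, Set.indicator_apply, Set.mem_ofPred_eq, Pi.one_apply]
  have hiS : Integrable ({ω | ℓ < L ω}.indicator (1 : Ω → ℝ)) P := (integrable_const 1).indicator hS
  have hiT : Integrable ({ω | L ω ≤ ℓ}.indicator (1 : Ω → ℝ)) P := (integrable_const 1).indicator hT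
  rw [hsplit, integral_add (hiS.const_mul τ) (hiT.const_mul (1 - τ)),
    integral_const_mul, integral_const_mul, integral_indicator_one hS, integral_indicator_one hT,
    measureReal_def, measureReal_def]

end

theorem expectile_subgradient {Ω : Type*} [MeasurableSpace Ω] (P : Measure Ω)
    [IsProbabilityMeasure P] (L : Ω → ℝ) (hLm : Measurable L) (hLb : ∃ C, ∀ ω, |L ω| ≤ C)
    (τ : ℝ) (hτ0 : 1 / 2 ≤ τ) (hτ1 : τ < 1) (ℓ : ℝ)
    (hℓ : τ * ∫ ω, max (L ω - ℓ) 0 ∂P = (1 - τ) * ∫ ω, max (ℓ - L ω) 0 ∂P)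
    (φ : Ω → ℝ)
    (hφ : ∀ ω, φ ω = (τ * (if ℓ < L ω then (1 : ℝ) else 0)
        + (1 - τ) * (if L ω ≤ ℓ then (1 : ℝ) else 0))
        / (τ * (P {ω' | ℓ < L ω'}).toReal + (1 - τ) * (P {ω' | L ω' ≤ ℓ}).toReal)) :
    (∀ ω, 0 ≤ φ ω) ∧ (∫ ω, φ ω ∂P) = 1 ∧ ℓ = (∫ ω, φ ω * L ω ∂P) ∧
      ∀ (Lstar : Ω → ℝ), Measurable Lstar → (∃ C, ∀ ω, |Lstar ω| ≤ C) →
        ∀ ℓ' : ℝ,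
          τ * ∫ ω, max ((L ω + Lstar ω) - ℓ') 0 ∂P
              = (1 - τ) * ∫ ω, max (ℓ' - (L ω + Lstar ω)) 0 ∂P →
          ℓ + ∫ ω, φ ω * Lstar ω ∂P ≤ ℓ' := by
  have hτpos : 0 < τ := by linarith
  have hL : Integrable L P := integrable_of_abs_le hLm hLb
  have hexp : IsExpectile P τ L ℓ := hℓ
  obtain rfl : φ = expectileDensity P τ L ℓ := funext fun ω => by
    rw [hφ, expectileDensity, integral_expectileWeight_sub hLm, expectileWeight_sub_eq_ite]
  refine ⟨expectileDensity_nonneg hτpos hτ1 hLm.aemeasurable,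
    integral_expectileDensity hτpos hτ1 hLm.aemeasurable,
    (hexp.integral_expectileDensity_mul_self hτpos hτ1 hL).symm,
    fun Lstar hLstarm hLstarb ℓ' hℓ' => ?_⟩
  exact hexp.add_integral_expectileDensity_mul_le hτ0 hτ1 hL
    (integrable_of_abs_le hLstarm hLstarb) hℓ'
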